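/- Let λ > 0, let Φ be a symmetric positive semidefinite d×d real matrix, let Q ∈ ℝ^{d×C}, let F_t ∈ ℝ^{n×d} and Y_t ∈ ℝ^{n×C}. Set R_{t−1} = (Φ + λI)⁻¹, W_{t−1} = R_{t−1}Q, and R_t = (Φ + F_tᵀF_t + λI)⁻¹. Then the recursive-least-squares weight update W_t = W_{t−1} + R_t F_tᵀ(Y_t − F_t W_{t−1}) satisfies W_t = R_t (Q + F_tᵀ Y_t); i.e., the recursively updated classifier equals the exact batch ridge-regression solution computed from the accumulated cross-correlation Q + F_tᵀY_t. -/

import Mathlib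

open Matrix

theorem Matrix.inv_mul_add_inv_mul_mul_sub_eq_of_eq_add_mul {m n p R : Type*}
    [Fintype m] [Fintype n] [DecidableEq m] [CommRing R] {A B : Matrix m m R}
    (G : Matrix m n R) (F : Matrix n m R) (hA : IsUnit A) (hB : IsUnit B) (hBA : B = A + G * F)
    (Q : Matrix m p R) (Y : Matrix n p R) :
    A⁻¹ * Q + B⁻¹ * G * (Y - F * (A⁻¹ * Q)) = B⁻¹ * (Q + G * Y) := by
  have hAdet : IsUnit A.det := (isUnit_iff_isUnit_det A).mp hA
  have hBdet : IsUnit B.det := (isUnit_iff_isUnit_det B).mp hB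
  -- multiplied by `B`, the left side is `(B - G * F) * A⁻¹ * Q + G * Y = Q + G * Y`
  have hmul : B * (A⁻¹ * Q + B⁻¹ * G * (Y - F * (A⁻¹ * Q))) = Q + G * Y := by
    rw [Matrix.mul_add, Matrix.mul_assoc B⁻¹, mul_nonsing_inv_cancel_left B _ hBdet, hBA,
      Matrix.add_mul, ← Matrix.mul_assoc A, mul_nonsing_inv A hAdet, Matrix.one_mul,
      Matrix.mul_sub, Matrix.mul_assoc G F]
    abel
  rw [← hmul, nonsing_inv_mul_cancel_left B _ hBdet]

theorem Matrix.PosSemidef.posDef_add_smul_one {n : Type*} [Fintype n] [DecidableEq n]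
    {Φ : Matrix n n ℝ} (hΦ : Φ.PosSemidef) {lam : ℝ} (hlam : 0 < lam) :
    (Φ + lam • 1).PosDef :=
  PosDef.posSemidef_add hΦ (PosDef.one.smul hlam)

/-- One step of the recursive-least-squares weight update equals the exact batch
ridge-regression solution: with `R_{t−1} = (Φ + λI)⁻¹`, `W_{t−1} = R_{t−1} Q` and
`R_t = (Φ + FᵀF + λI)⁻¹`, the update
`W_t = W_{t−1} + R_t Fᵀ (Y − F W_{t−1})` satisfies `W_t = R_t (Q + Fᵀ Y)`. -/
theorem rls_weight_update_eq_batch {d C n : ℕ}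
    (lam : ℝ) (hlam : 0 < lam)
    (Φ : Matrix (Fin d) (Fin d) ℝ) (hΦ : Φ.PosSemidef)
    (Q : Matrix (Fin d) (Fin C) ℝ)
    (Ft : Matrix (Fin n) (Fin d) ℝ) (Yt : Matrix (Fin n) (Fin C) ℝ) :
    (Φ + lam • 1)⁻¹ * Q +
        (Φ + Ftᵀ * Ft + lam • 1)⁻¹ * Ftᵀ * (Yt - Ft * ((Φ + lam • 1)⁻¹ * Q)) =
      (Φ + Ftᵀ * Ft + lam • 1)⁻¹ * (Q + Ftᵀ * Yt) := by
  have hGram : (Ftᵀ * Ft).PosSemidef := by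
    simpa using posSemidef_conjTranspose_mul_self Ft
  have hA := hΦ.posDef_add_smul_one hlam
  have hB := (hΦ.add hGram).posDef_add_smul_one hlam
  exact inv_mul_add_inv_mul_mul_sub_eq_of_eq_add_mul Ftᵀ Ft hA.isUnit hB.isUnit
    (add_right_comm Φ _ _) Q Yt
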